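/- Under the same setup with ε' = 1/(9p), if λ̃_s^{-1} ≤ Δ/5, λ̃_{q+1}^{-1} - λ̃_q^{-1} ≥ (5/9)Δ, and λ̃_{i+1}^{-1} - λ̃_i^{-1} < (5/9)Δ for all s ≤ i < q (minimality of q), then λ_q - λ_{q+1} ≥ Δ/9. -/

import Mathlib

/-! Write `ε = 1/(9p)`, `a = λ̃_q⁻¹` and `b = λ̃_{q+1}⁻¹`. Inverting the approximation bounds gives
`(1-ε)(λ-λ_q) ≤ a` and `(1-ε) b ≤ λ-λ_{q+1}`, so `λ_q - λ_{q+1} ≥ (1-ε) b - a/(1-ε)`. By minimality of `q`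
the jumps of `λ̃⁻¹` before `q` are below `5Δ/9`, so `a ≤ Δ/5 + (q-s)·5Δ/9 ≤ p·5Δ/9`, i.e. `ε a ≤ 5Δ/81`;
together with `b ≥ a + 5Δ/9` this leaves a gap of at least `Δ/9`. -/

lemma mul_le_inv_and_mul_inv_le_of_approx {c x y : ℝ} (hc : 0 < c) (hx : 0 < x)
    (hlo : c * y⁻¹ ≤ x) (hhi : x ≤ c⁻¹ * y⁻¹) : c * y ≤ x⁻¹ ∧ c * x⁻¹ ≤ y := by
  have hy : 0 < y := by
    have : 0 < c⁻¹ * y⁻¹ := hx.trans_le hhi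
    exact inv_pos.1 (pos_of_mul_pos_right this (inv_pos.2 hc).le)
  refine ⟨(le_inv_comm₀ (by positivity) hx).2 (by rwa [mul_inv]), ?_⟩
  rw [← div_eq_mul_inv, div_le_iff₀ hx, mul_comm y]
  rwa [← div_eq_mul_inv, div_le_iff₀ hy] at hlo

lemma le_add_mul_of_forall_sub_le {f : ℕ → ℝ} {s q : ℕ} {A d : ℝ} (hsq : s ≤ q) (hs : f s ≤ A)
    (hstep : ∀ i, s ≤ i → i < q → f (i + 1) - f i ≤ d) : f q ≤ A + ((q - s : ℕ) : ℝ) * d := by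
  induction q, hsq using Nat.le_induction with
  | base => simpa using hs
  | succ n hsn ih =>
    have hn := ih fun i hi hin => hstep i hi (by omega)
    have hlast := hstep n hsn (by omega)
    rw [Nat.sub_add_comm hsn, Nat.cast_succ]
    linarith

lemma div_nine_le_sub_of_approx {ε a b u v Δ : ℝ} (hε0 : 0 ≤ ε) (hε : ε ≤ 1 / 9) (hΔ : 0 ≤ Δ)
    (ha : 0 ≤ a) (hεa : ε * a ≤ 5 / 81 * Δ) (hab : a + 5 / 9 * Δ ≤ b)
    (hu : (1 - ε) * u ≤ a) (hv : (1 - ε) * b ≤ v) : Δ / 9 ≤ v - u := by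
  have hscaled : 230 / 729 * Δ ≤ (1 - ε) * (v - u) := by
    have hbv : (1 - ε) ^ 2 * b ≤ (1 - ε) * v := by
      rw [sq, mul_assoc]; exact mul_le_mul_of_nonneg_left hv (by linarith)
    nlinarith [mul_nonneg hε0 ha, mul_nonneg (mul_nonneg hε0 hε0) ha]
  nlinarith

theorem stmt_9_general (lam : ℝ) (lamv tl : ℕ → ℝ) (s q k p : ℕ) (Delta : ℝ)
    (hsq : s ≤ q) (hqk : q < k) (hp : k ≤ p)
    (hDelta : 0 < Delta)
    (htlpos : ∀ i, s ≤ i → i ≤ k → 0 < tl i)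
    (happrox : ∀ i, s ≤ i → i ≤ k →
      (1 - 1/(9*(p:ℝ))) * (lam - lamv i)⁻¹ ≤ tl i ∧
      tl i ≤ (1 - 1/(9*(p:ℝ)))⁻¹ * (lam - lamv i)⁻¹)
    (hstart : (tl s)⁻¹ ≤ Delta / 5)
    (hgapq : (tl (q+1))⁻¹ - (tl q)⁻¹ ≥ (5/9) * Delta)
    (hmin : ∀ i, s ≤ i → i < q → (tl (i+1))⁻¹ - (tl i)⁻¹ < (5/9) * Delta) :
    lamv q - lamv (q+1) ≥ Delta / 9 := by
  set ε : ℝ := 1 / (9 * (p : ℝ))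
  have hqp : ((q - s : ℕ) : ℝ) + 1 ≤ p := by exact_mod_cast (by omega : q - s + 1 ≤ p)
  have hp0 : (p : ℝ) ≠ 0 := by linarith [(q - s : ℕ).cast_nonneg (α := ℝ)]
  have hεp : ε * p = 1 / 9 := by simp only [ε]; field_simp
  have hε0 : 0 ≤ ε := by positivity
  have hε : ε ≤ 1 / 9 := by nlinarith
  have hbounds : ∀ i, s ≤ i → i ≤ k →
      (1 - ε) * (lam - lamv i) ≤ (tl i)⁻¹ ∧ (1 - ε) * (tl i)⁻¹ ≤ lam - lamv i := fun i hi hik =>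
    mul_le_inv_and_mul_inv_le_of_approx (by linarith) (htlpos i hi hik)
      (happrox i hi hik).1 (happrox i hi hik).2
  have hq := le_add_mul_of_forall_sub_le (f := fun i => (tl i)⁻¹) hsq hstart
    fun i hi hiq => (hmin i hi hiq).le
  have hεa : ε * (tl q)⁻¹ ≤ 5 / 81 * Delta := by
    have : (tl q)⁻¹ ≤ p * (5 / 9 * Delta) := by nlinarith
    calc ε * (tl q)⁻¹ ≤ ε * (p * (5 / 9 * Delta)) := mul_le_mul_of_nonneg_left this hε0
      _ = 5 / 81 * Delta := by rw [← mul_assoc, hεp]; ring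
  have hgap := div_nine_le_sub_of_approx hε0 hε hDelta.le
    (inv_pos.2 (htlpos q hsq hqk.le)).le hεa (by linarith)
    (hbounds q hsq hqk.le).1 (hbounds (q + 1) (by omega) hqk).2
  linarith

theorem stmt_9 (lam : ℝ) (lamv tl : ℕ → ℝ) (s q k p : ℕ) (Delta : ℝ)
    (hsq : s ≤ q) (hqk : q < k) (hp : k ≤ p) (hppos : 0 < p)
    (hDelta : 0 < Delta)
    (hmono : ∀ i, s ≤ i → i < k → lamv (i+1) ≤ lamv i)
    (hshift : lam > lamv s)
    (htlpos : ∀ i, s ≤ i → i ≤ k → 0 < tl i)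
    (happrox : ∀ i, s ≤ i → i ≤ k →
      (1 - 1/(9*(p:ℝ))) * (lam - lamv i)⁻¹ ≤ tl i ∧
      tl i ≤ (1 - 1/(9*(p:ℝ)))⁻¹ * (lam - lamv i)⁻¹)
    (hstart : (tl s)⁻¹ ≤ Delta / 5)
    (hgapq : (tl (q+1))⁻¹ - (tl q)⁻¹ ≥ (5/9) * Delta)
    (hmin : ∀ i, s ≤ i → i < q → (tl (i+1))⁻¹ - (tl i)⁻¹ < (5/9) * Delta) :
    lamv q - lamv (q+1) ≥ Delta / 9 :=
  stmt_9_general lam lamv tl s q k p Delta hsq hqk hp hDelta htlpos happrox hstart hgapq hmin
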